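/- Let R be a commutative ring, e ≥ 2 an integer, g ∈ R[X], and let f = X + Xᵉ·g ∈ R[X]. Then for every k ≥ 1, the k-th iterate of f satisfies f⁽ᵏ⁾ ≡ X + k·Xᵉ·g (mod X^{2e−1}), i.e. f⁽ᵏ⁾ − X − k·Xᵉ·g is divisible by X^{2e−1} in R[X]. -/
import Mathlib


open Polynomial

/-- The `k`-th compositional iterate of a polynomial, with `f⁽⁰⁾ = X`. -/
noncomputable def polyIter {R : Type*} [CommSemiring R] (f : R[X]) : ℕ → R[X]
  | 0 => X
  | n + 1 => f.comp (polyIter f n)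

lemma comp_sub_self_dvd {R : Type*} [CommRing R] (g p : R[X]) :
    p - X ∣ g.comp p - g := by
  have h := sub_dvd_eval_sub p X (g.map C)
  simpa [eval_map, comp, eval₂_map] using h

/-- if `f = X + Xᵉ·g` over a commutative ring `R` with `e ≥ 2`, then for
every `k ≥ 1`, `f⁽ᵏ⁾ ≡ X + k·Xᵉ·g (mod X^(2e-1))`. -/
theorem stmt10 {R : Type*} [CommRing R] (e : ℕ) (he : 2 ≤ e) (g : R[X])
    (f : R[X]) (hf : f = X + X ^ e * g) (k : ℕ) (hk : 1 ≤ k) :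
    (X : R[X]) ^ (2 * e - 1) ∣ polyIter f k - (X + (k : R[X]) * (X ^ e * g)) := by
  induction k, hk using Nat.le_induction with
  | base =>
    simp [polyIter, hf]
  | succ n hn ih =>
    set p := polyIter f n with hp
    have hXp : (X : R[X]) ∣ p := by
      obtain ⟨h, hh⟩ := ih
      have : p = X + (n : R[X]) * (X ^ e * g) + X ^ (2 * e - 1) * h := by
        linear_combination hh
      rw [this]
      have h1 : (X : R[X]) ∣ X ^ e := dvd_pow_self _ (by omega)
      have h2 : (X : R[X]) ∣ X ^ (2 * e - 1) := dvd_pow_self _ (by omega)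
      exact dvd_add (dvd_add (dvd_refl _) (Dvd.dvd.mul_left (h1.mul_right g) _))
        (h2.mul_right h)
    have hXep : (X : R[X]) ^ e ∣ p - X := by
      obtain ⟨h, hh⟩ := ih
      have : p - X = (n : R[X]) * (X ^ e * g) + X ^ (2 * e - 1) * h := by
        linear_combination hh
      rw [this]
      exact dvd_add (Dvd.dvd.mul_left (dvd_mul_right _ _) _)
        ((pow_dvd_pow _ (by omega)).mul_right h)
    -- X^(2e-1) ∣ p^e - X^e
    have d1 : (X : R[X]) ^ (2 * e - 1) ∣ p ^ e - X ^ e := by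
      rw [← geom_sum₂_mul]
      have hsum : (X : R[X]) ^ (e - 1) ∣ ∑ i ∈ Finset.range e, p ^ i * X ^ (e - 1 - i) := by
        refine Finset.dvd_sum fun i hi => ?_
        have hi' : i < e := Finset.mem_range.mp hi
        have : (X : R[X]) ^ (e - 1) = X ^ i * X ^ (e - 1 - i) := by
          rw [← pow_add]; congr 1; omega
        rw [this]
        exact mul_dvd_mul (pow_dvd_pow_of_dvd hXp i) dvd_rfl
      have : (X : R[X]) ^ (2 * e - 1) = X ^ (e - 1) * X ^ e := by
        rw [← pow_add]; congr 1; omega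
      rw [this]
      exact mul_dvd_mul hsum hXep
    -- X^(2e-1) ∣ X^e * (g.comp p - g)
    have d2 : (X : R[X]) ^ (2 * e - 1) ∣ X ^ e * (g.comp p - g) := by
      obtain ⟨q, hq⟩ := (comp_sub_self_dvd g p)
      obtain ⟨r, hr⟩ := hXep
      rw [hq, hr]
      have h2e : 2 * e = e + e := by omega
      have : (X : R[X]) ^ e * (X ^ e * r * q) = X ^ (2 * e) * (r * q) := by
        rw [h2e, pow_add]; ring
      rw [this]
      exact (pow_dvd_pow _ (by omega)).mul_right _
    have hcomp : polyIter f (n + 1) = p + p ^ e * g.comp p := by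
      show f.comp p = _
      simp [hf, add_comp, mul_comp, pow_comp]
    obtain ⟨h, hh⟩ := ih
    have key : polyIter f (n + 1) - (X + ((n : R[X]) + 1) * (X ^ e * g)) =
        (p - (X + (n : R[X]) * (X ^ e * g))) + (p ^ e - X ^ e) * g.comp p
          + X ^ e * (g.comp p - g) := by
      rw [hcomp]; ring
    rw [Nat.cast_add, Nat.cast_one, key]
    exact dvd_add (dvd_add ⟨h, hh⟩ (d1.mul_right _)) d2
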